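/- arXiv:2203.12638 — 2 statements merged into one kernel-verified Lean document; each statement's English description precedes it below -/
import Mathlib

section
/- Let G be a finitely generated group with finite generating set X, relatively finitely presented with respect to H_Λ = {H_λ : λ ∈ Λ}. If w is a regular word over X ∪ 𝓗, then every λ-syllable of w is isolated in w and consists of a single letter. -/
namespace RelPres

variable {G : Type*} [Group G] {Λ : Type*}

/-- A letter of the alphabet `X ∪ 𝓗`, where `𝓗 = ⋃ l, (H̃ l \ {1})` consists of the
nontrivial elements of pairwise disjoint copies of the peripheral subgroups `H l`. -/
def Letter (H : Λ → Subgroup G) (X : Set G) : Type _ :=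
  {x : G // x ∈ X} ⊕ (Σ l : Λ, {h : G // h ∈ H l ∧ h ≠ 1})

variable {H : Λ → Subgroup G} {X : Set G}

/-- The element of `G` represented by a letter. -/
def Letter.val : Letter H X → G
  | Sum.inl x => x.1
  | Sum.inr p => p.2.1

/-- The peripheral type of a letter: `none` for letters from `X`, `some l` for letters
from the copy `H̃ l` of `H l`. -/
def Letter.ltype : Letter H X → Option Λ
  | Sum.inl _ => none
  | Sum.inr p => some p.1

/-- The element of `G` represented by a word over `X ∪ 𝓗`. -/
def evalWord (w : List (Letter H X)) : G := (w.map Letter.val).prod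

/-- The free product `F = (∗_λ H̃_λ) ∗ F(X)`. -/
abbrev RelFree (H : Λ → Subgroup G) (X : Set G) :=
  Monoid.Coprod (Monoid.CoprodI fun l : Λ => ↥(H l)) (FreeGroup {x : G // x ∈ X})

/-- The canonical homomorphism `ε : F → G`. -/
def eps (H : Λ → Subgroup G) (X : Set G) : RelFree H X →* G :=
  Monoid.Coprod.lift (Monoid.CoprodI.lift fun l => (H l).subtype)
    (FreeGroup.lift Subtype.val)

/-- The canonical image of a letter in `F`. -/
def Letter.toF : Letter H X → RelFree H X
  | Sum.inl x => Monoid.Coprod.inr (FreeGroup.of x)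
  | Sum.inr p => Monoid.Coprod.inl (Monoid.CoprodI.of (⟨p.2.1, p.2.2.1⟩ : H p.1))

/-- The image in `F` of a word over `X ∪ 𝓗`. -/
def wordToF (w : List (Letter H X)) : RelFree H X := (w.map Letter.toF).prod

/-- `g` is a product (in `F`) of `k` conjugates of elements of `R ∪ R⁻¹`. -/
def IsConjProd {F : Type*} [Group F] (R : Set F) (k : ℕ) (g : F) : Prop :=
  ∃ f r : Fin k → F, (∀ i, r i ∈ R ∨ (r i)⁻¹ ∈ R) ∧
    g = (List.ofFn fun i => (f i)⁻¹ * r i * f i).prod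

/-- `⟨X, 𝓗 ∣ 𝓢, R⟩` is a finite relative presentation of `G` with respect to the
collection of peripheral subgroups `H`: `X` is a finite symmetric relative generating
set, `R` is finite and its normal closure in `F` is the kernel of `ε`. -/
def FinRelPres (H : Λ → Subgroup G) (X : Set G) (R : Set (RelFree H X)) : Prop :=
  X.Finite ∧ (∀ x ∈ X, x⁻¹ ∈ X) ∧ Function.Surjective (eps H X) ∧
    R.Finite ∧ Subgroup.normalClosure R = (eps H X).ker

/-- The relative Dehn function of the presentation is well-defined: for each `ℓ` there
is a uniform bound `D` on the number of conjugates of relators needed to express any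
word of length at most `ℓ` over `X ∪ 𝓗` representing `1` in `G`. -/
def WellDefinedDehn (H : Λ → Subgroup G) (X : Set G) (R : Set (RelFree H X)) : Prop :=
  ∀ ℓ : ℕ, ∃ D : ℕ, ∀ w : List (Letter H X), w.length ≤ ℓ → evalWord w = 1 →
    ∃ k ≤ D, IsConjProd R k (wordToF w)

/-- The relative Dehn function of the presentation is bounded above by a linear
function, i.e. `G` is hyperbolic relative to the collection `H`. -/
def LinearDehn (H : Λ → Subgroup G) (X : Set G) (R : Set (RelFree H X)) : Prop :=
  ∃ C : ℕ, 0 < C ∧ ∀ w : List (Letter H X), evalWord w = 1 →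
    ∃ k ≤ C * w.length, IsConjProd R k (wordToF w)

/-- Word length of `g ∈ G` with respect to the alphabet `X ∪ 𝓗`, i.e. the distance
from `1` to `g` in the relative Cayley graph `Γ(G, X ∪ 𝓗)`. -/
noncomputable def relLen (H : Λ → Subgroup G) (X : Set G) (g : G) : ℕ :=
  sInf {n : ℕ | ∃ w : List (Letter H X), w.length = n ∧ evalWord w = g}

/-- A subset of `G` is bounded (has finite diameter) in the relative Cayley graph
`Γ(G, X ∪ 𝓗)`. -/
def BoundedIn (H : Λ → Subgroup G) (X : Set G) (S : Set G) : Prop :=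
  ∃ N : ℕ, ∀ a ∈ S, ∀ b ∈ S, relLen H X (a⁻¹ * b) ≤ N

/-- `g` is loxodromic: `n ↦ gⁿ` is a quasiisometric embedding of `ℤ` into the relative
Cayley graph `Γ(G, X ∪ 𝓗)`. -/
def Loxodromic (H : Λ → Subgroup G) (X : Set G) (g : G) : Prop :=
  ∃ C : ℝ, 1 ≤ C ∧ ∀ m n : ℤ,
    (relLen H X ((g ^ m)⁻¹ * g ^ n) : ℝ) ≤ C * |(m : ℝ) - (n : ℝ)| + C ∧
    C⁻¹ * |(m : ℝ) - (n : ℝ)| - C ≤ (relLen H X ((g ^ m)⁻¹ * g ^ n) : ℝ)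

/-- Exactly one of three propositions holds. -/
def ExactlyOne (P Q R : Prop) : Prop :=
  (P ∧ ¬Q ∧ ¬R) ∨ (¬P ∧ Q ∧ ¬R) ∨ (¬P ∧ ¬Q ∧ R)

/-- `K` is conjugate in `G` to a subgroup of some peripheral subgroup `H l`. -/
def ConjIntoPeripheral (H : Λ → Subgroup G) (K : Subgroup G) : Prop :=
  ∃ g : G, ∃ l : Λ, ∀ k ∈ K, g * k * g⁻¹ ∈ H l

/-- Adjacency in the relative Cayley graph `Γ(G, X ∪ 𝓗)`: two distinct vertices are
adjacent iff they differ by a letter of the alphabet. -/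
def cayAdj (H : Λ → Subgroup G) (X : Set G) (a b : G) : Prop :=
  a ≠ b ∧ ∃ s : Letter H X, a * Letter.val s = b ∨ b * Letter.val s = a

/-- A word over `X ∪ 𝓗` is regular: a path labelled by it has a regular neighbourhood
in `Γ(G, X ∪ 𝓗)`, i.e. whenever two of the traversed vertices coincide or are joined
by an edge, their positions along the path differ by at most `1`. -/
def RegularWord (H : Λ → Subgroup G) (X : Set G) (w : List (Letter H X)) : Prop :=
  ∀ i j : ℕ, i ≤ w.length → j ≤ w.length →
    (evalWord (w.take i) = evalWord (w.take j) ∨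
      cayAdj H X (evalWord (w.take i)) (evalWord (w.take j))) →
    Nat.dist i j ≤ 1

/-- The alternating growth condition for a sequence of words over `X ∪ 𝓗`:
(0) all words have the same length `ℓ ≥ 2`;
(I) an index carrying a letter of `X` carries the same letter in every word;
(II) an index carrying a letter of `H̃ l` carries letters of `H̃ l` in every word;
(III) the first index is not of type `X`;
(IV) two consecutive indices are never of the same type;
(V) if an index is of type `l`, the element represented by its letter lies in no other
peripheral subgroup, and every word over `X` representing it has length at least `n`;
(VI) each word is regular with respect to `X ∪ 𝓗`. -/
def AGC (H : Λ → Subgroup G) (X : Set G) (w : ℕ → List (Letter H X)) : Prop :=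
  (∃ ℓ : ℕ, 2 ≤ ℓ ∧ ∀ n, (w n).length = ℓ) ∧
  (∀ i n m : ℕ, ∀ x : {x : G // x ∈ X},
    (w n)[i]? = some (Sum.inl x) → (w m)[i]? = some (Sum.inl x)) ∧
  (∀ i n m : ℕ, ∀ a b : Letter H X, ∀ l : Λ, (w n)[i]? = some a → (w m)[i]? = some b →
    Letter.ltype a = some l → Letter.ltype b = some l) ∧
  (∀ n : ℕ, ∀ a : Letter H X, (w n)[0]? = some a → Letter.ltype a ≠ none) ∧
  (∀ i n : ℕ, ∀ a b : Letter H X, (w n)[i]? = some a → (w n)[i+1]? = some b →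
    Letter.ltype a ≠ Letter.ltype b) ∧
  (∀ i n : ℕ, ∀ a : Letter H X, ∀ l : Λ, (w n)[i]? = some a → Letter.ltype a = some l →
    (∀ μ : Λ, μ ≠ l → Letter.val a ∉ H μ) ∧
    (∀ u : List G, (∀ g ∈ u, g ∈ X) → u.prod = Letter.val a → n ≤ u.length)) ∧
  (∀ n, RegularWord H X (w n))

/-- Word length of `g` over `S ∪ S⁻¹` (with value `⊤` if `g` is not a product of such
elements). -/
noncomputable def wlen (S : Set G) (g : G) : ℕ∞ :=
  sInf {n : ℕ∞ | ∃ w : List G, (∀ a ∈ w, a ∈ S ∨ a⁻¹ ∈ S) ∧ w.prod = g ∧ (w.length : ℕ∞) = n}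

/-- The relative growth function `β^S_K` of a subgroup `K ≤ G` with respect to `S`:
the number of elements of `K` represented by words of length at most `n` over
`S ∪ S⁻¹`. -/
noncomputable def relGrowth (S : Set G) (K : Subgroup G) (n : ℕ) : ℕ :=
  {g : G | g ∈ K ∧ wlen S g ≤ (n : ℕ∞)}.ncard

/-- The subgroup `K`, viewed as an abstract group, has subexponential growth: for every
finite generating set of `K` and every `a > 1`, `β(n)/aⁿ → 0`. -/
def HasSubexpGrowth (K : Subgroup G) : Prop :=
  ∀ Z : Finset G, (Z : Set G) ⊆ K → Subgroup.closure (Z : Set G) = K →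
    ∀ a : ℝ, 1 < a →
      Filter.Tendsto (fun n => (relGrowth (Z : Set G) K n : ℝ) / a ^ n)
        Filter.atTop (nhds 0)

end RelPres

/-! Any two vertices of a regular path lying in a common left coset of `H l` are at most one
step apart along the path. The endpoints of an `l`-syllable are such a pair, and so are the
initial vertices of two connected `l`-syllables; in the latter case the syllables would be
adjacent, contradicting maximality. -/

theorem List.eq_append_singleton_of_length_eq_succ {α : Type*} {u u' t t' : List α} {c : α}
    (h : u ++ c :: t = u' ++ t') (hlen : u'.length = u.length + 1) : u' = u ++ [c] := by
  have htake := congrArg (List.take (u.length + 1)) h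
  rw [List.take_left' hlen] at htake
  simpa [List.take_append, List.take_of_length_le] using htake.symm

namespace RelPres

variable {G : Type*} [Group G] {Λ : Type*} {H : Λ → Subgroup G} {X : Set G}

theorem evalWord_append (a b : List (Letter H X)) :
    evalWord (a ++ b) = evalWord a * evalWord b := by
  simp [evalWord]

theorem Letter.val_mem_of_ltype_eq :
    ∀ {a : Letter H X} {l : Λ}, a.ltype = some l → a.val ∈ H l
  | Sum.inr ⟨_, _, hg, _⟩, _, rfl => hg

theorem evalWord_mem_of_ltype_eq {v : List (Letter H X)} {l : Λ}
    (hv : ∀ a ∈ v, a.ltype = some l) : evalWord v ∈ H l :=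
  (H l).list_prod_mem (by simpa using fun a ha => Letter.val_mem_of_ltype_eq (hv a ha))

/-- A nontrivial element of `H l` is itself a letter, so two vertices in the same left coset
of `H l` coincide or are adjacent. -/
theorem RegularWord.dist_length_le_one {w p p' : List (Letter H X)} {l : Λ}
    (hw : RegularWord H X w) (hp : p <+: w) (hp' : p' <+: w)
    (hmem : (evalWord p)⁻¹ * evalWord p' ∈ H l) :
    Nat.dist p.length p'.length ≤ 1 := by
  refine hw _ _ hp.length_le hp'.length_le ?_
  rw [← List.prefix_iff_eq_take.mp hp, ← List.prefix_iff_eq_take.mp hp']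
  by_cases heq : evalWord p = evalWord p'
  · exact Or.inl heq
  · refine Or.inr ⟨heq, Sum.inr ⟨l, (evalWord p)⁻¹ * evalWord p', hmem, ?_⟩, Or.inl ?_⟩
    · exact fun h1 => heq (inv_mul_eq_one.mp h1)
    · exact mul_inv_cancel_left _ _

theorem RegularWord.length_le_one_of_ltype_eq {w u₁ v u₂ : List (Letter H X)} {l : Λ}
    (hw : RegularWord H X w) (hsplit : w = u₁ ++ v ++ u₂) (hvl : ∀ a ∈ v, a.ltype = some l) :
    v.length ≤ 1 := by
  have hdist := hw.dist_length_le_one (p := u₁) (p' := u₁ ++ v)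
    ⟨v ++ u₂, by rw [hsplit, List.append_assoc]⟩ ⟨u₂, hsplit.symm⟩
    (by rw [evalWord_append, inv_mul_cancel_left]; exact evalWord_mem_of_ltype_eq hvl)
  simpa [Nat.dist] using hdist

theorem RegularWord.inv_mul_evalWord_not_mem {w u₁ v u₂ u₁' v' u₂' : List (Letter H X)}
    {l : Λ} (hw : RegularWord H X w) (hsplit : w = u₁ ++ v ++ u₂)
    (hsplit' : w = u₁' ++ v' ++ u₂') (hv : v ≠ []) (hv' : v' ≠ [])
    (hvl : ∀ a ∈ v, a.ltype = some l) (hvl' : ∀ a ∈ v', a.ltype = some l)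
    (hmax₁ : ∀ a : Letter H X, u₁.getLast? = some a → a.ltype ≠ some l)
    (hmax₁' : ∀ a : Letter H X, u₁'.getLast? = some a → a.ltype ≠ some l)
    (hne : u₁'.length ≠ u₁.length) :
    (evalWord u₁)⁻¹ * evalWord u₁' ∉ H l := by
  wlog hlt : u₁.length < u₁'.length generalizing u₁ v u₂ u₁' v' u₂'
  · intro hmem
    exact this hsplit' hsplit hv' hv hvl' hvl hmax₁' hmax₁ hne.symm (by omega)
      (by simpa using inv_mem hmem)
  intro hmem
  have hdist := hw.dist_length_le_one ⟨v ++ u₂, by rw [hsplit, List.append_assoc]⟩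
    ⟨v' ++ u₂', by rw [hsplit', List.append_assoc]⟩ hmem
  have hsucc : u₁'.length = u₁.length + 1 := by
    simp only [Nat.dist] at hdist
    omega
  -- The two syllables are adjacent, so `u₁'` ends with the first letter of `v`.
  obtain ⟨c, t, rfl⟩ := List.exists_cons_of_ne_nil hv
  have hu₁' : u₁' = u₁ ++ [c] :=
    List.eq_append_singleton_of_length_eq_succ (t := t ++ u₂) (t' := v' ++ u₂')
      (by simpa using hsplit.symm.trans hsplit') hsucc
  exact hmax₁' c (by rw [hu₁', List.getLast?_concat]) (hvl c List.mem_cons_self)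

end RelPres

open RelPres in
/-- An `l`-syllable is encoded by a split `w = u₁ ++ v ++ u₂`; two `l`-components of the path
are connected by an `H̃ l`-labelled path iff their vertices lie in the same left coset of
`H l`. -/
theorem regularWord_syllables_isolated_single_letter_general
    {G : Type*} [Group G] {Λ : Type*}
    (H : Λ → Subgroup G) (X : Set G)
    (w : List (Letter H X)) (hw : RegularWord H X w) (l : Λ)
    (u₁ v u₂ : List (Letter H X)) (hsplit : w = u₁ ++ v ++ u₂) (hv : v ≠ [])
    (hvl : ∀ a ∈ v, Letter.ltype a = some l)
    (hmax₁ : ∀ a : Letter H X, u₁.getLast? = some a → Letter.ltype a ≠ some l) :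
    v.length = 1 ∧
    ∀ u₁' v' u₂' : List (Letter H X), w = u₁' ++ v' ++ u₂' → v' ≠ [] →
      (∀ a ∈ v', Letter.ltype a = some l) →
      (∀ a : Letter H X, u₁'.getLast? = some a → Letter.ltype a ≠ some l) →
      (∀ a : Letter H X, u₂'.head? = some a → Letter.ltype a ≠ some l) →
      u₁'.length ≠ u₁.length →
      (evalWord u₁)⁻¹ * evalWord u₁' ∉ H l := by
  refine ⟨le_antisymm (hw.length_le_one_of_ltype_eq hsplit hvl) (List.length_pos_of_ne_nil hv),
    ?_⟩
  intro u₁' v' u₂' hsplit' hv' hvl' hmax₁' _ hne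
  exact hw.inv_mul_evalWord_not_mem hsplit hsplit' hv hv' hvl hvl' hmax₁ hmax₁' hne

open RelPres in
/-- **Syllables of regular words are single isolated letters.**
Let `G` be a finitely generated group with finite generating set `X`, relatively
finitely presented with respect to `H`.  If `w` is a regular word over `X ∪ 𝓗`, then
every `l`-syllable of `w` (a nonempty maximal block `v` of `H̃ l`-letters, written
`w = u₁ ++ v ++ u₂` where the adjacent letters of `u₁`, `u₂` are not `H̃ l`-letters)
consists of a single letter and is isolated in `w`: for every other `l`-syllable
`w = u₁' ++ v' ++ u₂'` (occurring at a different position), the vertices of the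
corresponding components of a path labelled by `w` lie in different left cosets
of `H l`, so the two components are not connected by a path labelled by
`H̃ l`-letters. -/
theorem regularWord_syllables_isolated_single_letter
    {G : Type*} [Group G] {Λ : Type*} (hG : Group.FG G)
    (H : Λ → Subgroup G) (X : Set G) (hXgen : Subgroup.closure X = ⊤)
    (R : Set (RelFree H X)) (hpres : FinRelPres H X R)
    (w : List (Letter H X)) (hw : RegularWord H X w) (l : Λ)
    (u₁ v u₂ : List (Letter H X)) (hsplit : w = u₁ ++ v ++ u₂) (hv : v ≠ [])
    (hvl : ∀ a ∈ v, Letter.ltype a = some l)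
    (hmax₁ : ∀ a : Letter H X, u₁.getLast? = some a → Letter.ltype a ≠ some l)
    (hmax₂ : ∀ a : Letter H X, u₂.head? = some a → Letter.ltype a ≠ some l) :
    v.length = 1 ∧
    ∀ u₁' v' u₂' : List (Letter H X), w = u₁' ++ v' ++ u₂' → v' ≠ [] →
      (∀ a ∈ v', Letter.ltype a = some l) →
      (∀ a : Letter H X, u₁'.getLast? = some a → Letter.ltype a ≠ some l) →
      (∀ a : Letter H X, u₂'.head? = some a → Letter.ltype a ≠ some l) →
      u₁'.length ≠ u₁.length →
      (evalWord u₁)⁻¹ * evalWord u₁' ∉ H l :=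
  regularWord_syllables_isolated_single_letter_general H X w hw l u₁ v u₂ hsplit hv hvl hmax₁
end

section
/- Let G be a finitely generated group with finite generating set X, and let H ≤ G be a finitely generated subgroup that is undistorted in G and has subexponential growth. Then for every subgroup K ≤ H, the relative exponential growth rate of K in G with respect to X exists and equals 1, i.e., lim_{n→∞} (β^X_K(n))^{1/n} = 1. -/
/-!
Undistortedness gives `β^X_K(n) ≤ β^Y_H(C n)`, and subexponential growth of `H` makes
`β^Y_H(C n) ≤ bⁿ` eventually, for every `b > 1`. Since `1 ∈ K` we also have `β^X_K(n) ≥ 1`,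
so the `n`-th roots are squeezed between `1` and any `b > 1`.
-/

variable {G : Type*} [Group G]

/-- Word length of `g` over `S ∪ S⁻¹` (with value `⊤` if `g` is not a product of such
elements). -/
noncomputable def wlen (S : Set G) (g : G) : ℕ∞ :=
  sInf {n : ℕ∞ | ∃ w : List G, (∀ a ∈ w, a ∈ S ∨ a⁻¹ ∈ S) ∧ w.prod = g ∧ (w.length : ℕ∞) = n}

/-- The relative growth function `β^S_K` of a subgroup `K ≤ G` with respect to `S`:
the number of elements of `K` represented by words of length at most `n` over
`S ∪ S⁻¹`. -/
noncomputable def relGrowth (S : Set G) (K : Subgroup G) (n : ℕ) : ℕ :=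
  {g : G | g ∈ K ∧ wlen S g ≤ (n : ℕ∞)}.ncard

open Filter Topology
open scoped Pointwise

theorem Finset.list_prod_mem_pow_length {M : Type*} [Monoid M] [DecidableEq M] {T : Finset M}
    {w : List M} (hw : ∀ a ∈ w, a ∈ T) : w.prod ∈ T ^ w.length := by
  induction w with
  | nil => simp
  | cons a w ih =>
    rw [List.prod_cons, List.length_cons, pow_succ']
    exact Finset.mul_mem_mul (hw a List.mem_cons_self)
      (ih fun b hb => hw b (List.mem_cons_of_mem a hb))

theorem wlen_le_iff (S : Set G) (g : G) (n : ℕ) :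
    wlen S g ≤ n ↔ ∃ w : List G, (∀ a ∈ w, a ∈ S ∨ a⁻¹ ∈ S) ∧ w.prod = g ∧ w.length ≤ n := by
  constructor
  · intro h
    by_contra! hlong
    have : ((n + 1 : ℕ) : ℕ∞) ≤ wlen S g := by
      refine le_sInf ?_
      rintro m ⟨w, hw, hprod, rfl⟩
      exact_mod_cast hlong w hw hprod
    exact absurd (by exact_mod_cast this.trans h) n.not_succ_le_self
  · rintro ⟨w, hw, hprod, hlen⟩
    calc wlen S g ≤ w.length := sInf_le ⟨w, hw, hprod, rfl⟩
      _ ≤ n := by exact_mod_cast hlen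

theorem wlen_one_le (S : Set G) (n : ℕ) : wlen S 1 ≤ n :=
  (wlen_le_iff S 1 n).2 ⟨[], by simp, rfl, by simp⟩

theorem finite_setOf_wlen_le (S : Finset G) (n : ℕ) : {g : G | wlen S g ≤ n}.Finite := by
  classical
  refine ((insert 1 (S ∪ S⁻¹)) ^ n).finite_toSet.subset fun g hg => ?_
  obtain ⟨w, hw, rfl, hlen⟩ := (wlen_le_iff _ _ _).1 hg
  refine Finset.pow_subset_pow_right (Finset.mem_insert_self _ _) hlen
    (Finset.list_prod_mem_pow_length fun a ha =>
      Finset.mem_insert_of_mem (by simpa [Finset.mem_inv] using hw a ha))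

-- `Set.ncard` is `0` on infinite sets, hence the finiteness of balls is needed here.
theorem one_le_relGrowth (S : Finset G) (K : Subgroup G) (n : ℕ) : 1 ≤ relGrowth S K n :=
  (Set.ncard_pos ((finite_setOf_wlen_le S n).subset fun _ hg => hg.2)).2
    ⟨1, K.one_mem, wlen_one_le _ n⟩

theorem relGrowth_le_relGrowth_mul {S : Set G} {T : Finset G} {K H : Subgroup G} (hKH : K ≤ H)
    {C : ℕ} (hC : ∀ h ∈ H, wlen T h ≤ C * wlen S h) (n : ℕ) :
    relGrowth S K n ≤ relGrowth T H (C * n) := by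
  refine Set.ncard_le_ncard (fun g ⟨hgK, hg⟩ => ⟨hKH hgK, ?_⟩)
    ((finite_setOf_wlen_le T _).subset fun _ hg => hg.2)
  calc wlen T g ≤ C * wlen S g := hC g (hKH hgK)
    _ ≤ C * n := mul_le_mul_right hg _
    _ = (C * n : ℕ) := by push_cast; rfl

theorem eventually_le_pow_of_tendsto_div_pow {v : ℕ → ℝ} {a : ℝ} (ha : 0 < a)
    (h : Tendsto (fun n => v n / a ^ n) atTop (𝓝 0)) : ∀ᶠ n in atTop, v n ≤ a ^ n := by
  filter_upwards [h.eventually_lt_const one_pos] with n hn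
  exact ((div_lt_one (pow_pos ha n)).1 hn).le

theorem eventually_comp_mul_le_pow {v : ℕ → ℝ} (hv : ∀ a > 1, ∀ᶠ m in atTop, v m ≤ a ^ m)
    {C : ℕ} (hC : 0 < C) {b : ℝ} (hb : 1 < b) : ∀ᶠ n in atTop, v (C * n) ≤ b ^ n := by
  set a := b ^ ((C : ℝ)⁻¹)
  have ha : 1 < a := Real.one_lt_rpow hb (by positivity)
  have hmul : Tendsto (C * ·) atTop atTop :=
    tendsto_atTop_mono (fun n => Nat.le_mul_of_pos_left n hC) tendsto_id
  filter_upwards [hmul.eventually (hv a ha)] with n hn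
  rwa [pow_mul, Real.rpow_inv_natCast_pow (by positivity) hC.ne'] at hn

theorem tendsto_rpow_one_div_of_one_le_of_eventually_le_pow {u : ℕ → ℝ} (h1 : ∀ n, 1 ≤ u n)
    (hu : ∀ a > 1, ∀ᶠ n in atTop, u n ≤ a ^ n) :
    Tendsto (fun n => u n ^ (1 / (n : ℝ))) atTop (𝓝 1) := by
  refine tendsto_order.2 ⟨fun b hb => Eventually.of_forall fun n =>
    hb.trans_le (Real.one_le_rpow (h1 n) (by positivity)), fun b hb => ?_⟩
  obtain ⟨a, ha1, hab⟩ := exists_between hb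
  filter_upwards [hu a ha1, eventually_ne_atTop 0] with n hn hn0
  calc u n ^ (1 / (n : ℝ)) ≤ (a ^ n) ^ ((n : ℝ)⁻¹) := by
        rw [one_div]; exact Real.rpow_le_rpow (by linarith [h1 n]) hn (by positivity)
    _ = a := Real.pow_rpow_inv_natCast (by linarith) hn0
    _ < b := hab

theorem relative_growth_rate_one_of_undistorted_subexponential_general
    (X : Finset G)
    (H : Subgroup G) (Y : Finset G) (hYH : (Y : Set G) ⊆ H)
    (hYgen : Subgroup.closure (Y : Set G) = H)
    (hundist : ∃ C : ℕ, 0 < C ∧ ∀ h ∈ H,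
      wlen (Y : Set G) h ≤ (C : ℕ∞) * wlen (X : Set G) h)
    (hsubexp : ∀ Z : Finset G, (Z : Set G) ⊆ H → Subgroup.closure (Z : Set G) = H →
      ∀ a : ℝ, 1 < a →
        Filter.Tendsto (fun n : ℕ => (relGrowth (Z : Set G) H n : ℝ) / a ^ n)
          Filter.atTop (nhds 0))
    (K : Subgroup G) (hK : K ≤ H) :
    Filter.Tendsto (fun n : ℕ => (relGrowth (X : Set G) K n : ℝ) ^ (1 / (n : ℝ)))
      Filter.atTop (nhds 1) := by
  obtain ⟨C, hC, hdist⟩ := hundist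
  have hH : ∀ a > 1, ∀ᶠ m in atTop, (relGrowth (Y : Set G) H m : ℝ) ≤ a ^ m := fun a ha =>
    eventually_le_pow_of_tendsto_div_pow (by linarith) (hsubexp Y hYH hYgen a ha)
  refine tendsto_rpow_one_div_of_one_le_of_eventually_le_pow
    (fun n => by exact_mod_cast one_le_relGrowth X K n) fun b hb => ?_
  filter_upwards [eventually_comp_mul_le_pow hH hC hb] with n hn
  exact le_trans (by exact_mod_cast relGrowth_le_relGrowth_mul hK hdist n) hn

/-- **Relative growth rates of subgroups of undistorted subgroups of subexponential
growth.**
Let `G` be a finitely generated group with finite generating set `X`, and let `H ≤ G`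
be a finitely generated subgroup (with finite generating set `Y`) that is undistorted
in `G` (there is `C > 0` with `|h|_Y ≤ C·|h|_X` for all `h ∈ H`) and has
subexponential growth (for every finite generating set `Z` of `H` and every `a > 1`,
`β^Z_H(n)/aⁿ → 0`).  Then for every subgroup `K ≤ H`, the relative exponential growth
rate of `K` in `G` with respect to `X` exists and equals `1`:
`lim_{n → ∞} (β^X_K(n))^(1/n) = 1`. -/
theorem relative_growth_rate_one_of_undistorted_subexponential
    (X : Finset G) (hX : Subgroup.closure (X : Set G) = ⊤)
    (H : Subgroup G) (Y : Finset G) (hYH : (Y : Set G) ⊆ H)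
    (hYgen : Subgroup.closure (Y : Set G) = H)
    (hundist : ∃ C : ℕ, 0 < C ∧ ∀ h ∈ H,
      wlen (Y : Set G) h ≤ (C : ℕ∞) * wlen (X : Set G) h)
    (hsubexp : ∀ Z : Finset G, (Z : Set G) ⊆ H → Subgroup.closure (Z : Set G) = H →
      ∀ a : ℝ, 1 < a →
        Filter.Tendsto (fun n : ℕ => (relGrowth (Z : Set G) H n : ℝ) / a ^ n)
          Filter.atTop (nhds 0))
    (K : Subgroup G) (hK : K ≤ H) :
    Filter.Tendsto (fun n : ℕ => (relGrowth (X : Set G) K n : ℝ) ^ (1 / (n : ℝ)))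
      Filter.atTop (nhds 1) :=
  relative_growth_rate_one_of_undistorted_subexponential_general X H Y hYH hYgen hundist hsubexp K
    hK
end
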